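/- There exists a function f : ℕ → ℕ such that the following holds. Let G be a group such that every tensor x ∈ T⊗(G) has centralizer C_{ν(G)}(x) of finite index in ν(G), and suppose m is the maximum over x ∈ T⊗(G) of the index of C_{[G,G^φ]}(x) in [G,G^φ]. Then for every tensor x ∈ T⊗(G), the subgroup [[G,G^φ], x] is finite of order at most f(m). -/

import Mathlib

namespace TensorNu

universe u

/-- The commutator `[x,y] = x⁻¹y⁻¹xy`. -/
def comm {K : Type*} [Group K] (x y : K) : K := x⁻¹ * y⁻¹ * x * y

/-- Conjugation `x^y = y⁻¹xy`. -/
def conj {K : Type*} [Group K] (x y : K) : K := y⁻¹ * x * y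

variable (G : Type u) [Group G]

/-- The defining relators of `ν(G)`, as elements of the free group on `G ⊕ G`,
where `Sum.inl` corresponds to the canonical copy of `G` and `Sum.inr` to the
isomorphic copy `G^φ` (`g ↦ g^φ`).  They comprise the multiplication tables of
`G` and of `G^φ`, together with the relations
`[g₁,g₂^φ]^{g₃} = [g₁^{g₃},(g₂^{g₃})^φ]` and `[g₁,g₂^φ]^{g₃} = [g₁,g₂^φ]^{g₃^φ}`. -/
def nuRels : Set (FreeGroup (G ⊕ G)) :=
  {r | (∃ g h : G, r = FreeGroup.of (Sum.inl g) * FreeGroup.of (Sum.inl h) *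
          (FreeGroup.of (Sum.inl (g * h)))⁻¹)
     ∨ (∃ g h : G, r = FreeGroup.of (Sum.inr g) * FreeGroup.of (Sum.inr h) *
          (FreeGroup.of (Sum.inr (g * h)))⁻¹)
     ∨ (∃ g₁ g₂ g₃ : G, r =
          conj (comm (FreeGroup.of (Sum.inl g₁)) (FreeGroup.of (Sum.inr g₂)))
              (FreeGroup.of (Sum.inl g₃)) *
            (comm (FreeGroup.of (Sum.inl (conj g₁ g₃)))
              (FreeGroup.of (Sum.inr (conj g₂ g₃))))⁻¹)
     ∨ (∃ g₁ g₂ g₃ : G, r =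
          conj (comm (FreeGroup.of (Sum.inl g₁)) (FreeGroup.of (Sum.inr g₂)))
              (FreeGroup.of (Sum.inl g₃)) *
            (conj (comm (FreeGroup.of (Sum.inl g₁)) (FreeGroup.of (Sum.inr g₂)))
              (FreeGroup.of (Sum.inr g₃)))⁻¹)}

/-- The group `ν(G)`. -/
abbrev Nu := PresentedGroup (nuRels G)

/-- The canonical image of `g ∈ G` in `ν(G)`. -/
def ι (g : G) : Nu G := PresentedGroup.of (Sum.inl g)

/-- The canonical image `g^φ` of `g ∈ G` (via the copy `G^φ`) in `ν(G)`. -/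
def ιφ (g : G) : Nu G := PresentedGroup.of (Sum.inr g)

/-- The set `T⊗(G)` of tensors `[a, b^φ]`, `a, b ∈ G`. -/
def tensorSet : Set (Nu G) := {x | ∃ a b : G, x = comm (ι G a) (ιφ G b)}

/-- The image of `G` in `ν(G)` as a subgroup. -/
def GSub : Subgroup (Nu G) := Subgroup.closure (Set.range (ι G))

/-- The image of `G^φ` in `ν(G)` as a subgroup. -/
def GφSub : Subgroup (Nu G) := Subgroup.closure (Set.range (ιφ G))

/-- The non-abelian tensor square `[G, G^φ] ≤ ν(G)`. -/
def tensorSquare : Subgroup (Nu G) := ⁅GSub G, GφSub G⁆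

/-- `[S, x]`: the subgroup generated by the commutators `[s, x]`, `s ∈ S`. -/
def commSub {K : Type*} [Group K] (S : Set K) (x : K) : Subgroup K :=
  Subgroup.closure {c | ∃ s ∈ S, c = comm s x}

end TensorNu

/-!
Put `H = [G, G^φ]` and `T = T⊗(G)`. The relations of `ν(G)` make `T` a normal subset of `ν(G)`,
and it generates `H`, so every `t ∈ T` has at most `m` conjugates under `H`.

If `S ⊆ T` is finite, the center of `⟨S⟩` contains `⋂_{s ∈ S} C(s)`, of index at most
`m ^ |S|`, so by Schur's theorem `⟨S⟩'` is finite of `m`-bounded order. For `S = {t, y}` this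
gives a uniform exponent `e` for all commutators `[t, y]` with `t, y ∈ T`; for `S = x^H` it
bounds `|N'|`, where `N = ⟨x^H⟩`. Since `[h, x] = (x^h)⁻¹ x`, the subgroup `[H, x] ≤ N` is
generated by at most `m` elements, and as `y^t = y [y, t]` with `[y, t]^e = 1`, induction on
`h` shows `(x^h)^e ≡ x^e` modulo `N'`. So the image of `[H, x]` in `N / N'` has order at most
`e ^ m`, and `|[H, x]| ≤ e ^ m |N'|`.
-/

namespace TensorNu

open Subgroup
open scoped commutatorElement

section

variable {K L : Type*} [Group K] [Group L]

lemma map_conj (f : K →* L) (a b : K) : f (conj a b) = conj (f a) (f b) := by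
  simp [conj]

lemma map_comm (f : K →* L) (a b : K) : f (comm a b) = comm (f a) (f b) := by
  simp [comm]

lemma conj_one (x : K) : conj x 1 = x := by simp [conj]

lemma conj_conj (x g h : K) : conj (conj x g) h = conj x (g * h) := by
  simp [conj, mul_assoc]

lemma conj_eq_mul_comm (x g : K) : conj x g = x * comm x g := by
  simp [conj, comm, mul_assoc]

lemma comm_eq_inv_conj_mul (g x : K) : comm g x = (conj x g)⁻¹ * x := by
  simp [comm, conj, mul_assoc]

lemma comm_eq_commutatorElement (x y : K) : comm x y = ⁅x⁻¹, y⁻¹⁆ := by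
  simp [comm, commutatorElement_def]

lemma range_conj_eq_orbit (x : K) : Set.range (conj x) = MulAction.orbit (ConjAct K) x := by
  ext y
  simp only [Set.mem_range, MulAction.mem_orbit_iff, ConjAct.smul_def, conj]
  constructor
  · rintro ⟨g, rfl⟩
    exact ⟨ConjAct.toConjAct g⁻¹, by simp⟩
  · rintro ⟨g, rfl⟩
    exact ⟨(ConjAct.ofConjAct g)⁻¹, by simp⟩

lemma ncard_range_conj (x : K) : (Set.range (conj x)).ncard = (centralizer {x}).index := by
  rw [range_conj_eq_orbit, ← MulAction.index_stabilizer, ConjAct.stabilizer_eq_centralizer]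
  rfl

lemma mem_range_conj_self (x : K) : x ∈ Set.range (conj x) := ⟨1, conj_one x⟩

lemma conj_mem_range_conj {x z : K} (hz : z ∈ Set.range (conj x)) (g : K) :
    conj z g ∈ Set.range (conj x) := by
  obtain ⟨h, rfl⟩ := hz
  exact ⟨h * g, (conj_conj x h g).symm⟩

lemma commSub_univ_eq_closure (x : K) :
    commSub Set.univ x = closure ((fun y => y⁻¹ * x) '' Set.range (conj x)) := by
  rw [commSub]
  congr 1
  ext c
  constructor
  · rintro ⟨s, -, rfl⟩
    exact ⟨_, ⟨s, rfl⟩, (comm_eq_inv_conj_mul s x).symm⟩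
  · rintro ⟨-, ⟨s, rfl⟩, rfl⟩
    exact ⟨s, trivial, (comm_eq_inv_conj_mul s x).symm⟩

lemma index_centralizer_eq_relIndex {P : Subgroup K} (x : P) :
    (centralizer {x}).index = (centralizer {(x : K)}).relIndex P := by
  rw [relIndex]
  congr 1
  ext y
  simp [mem_subgroupOf, mem_centralizer_singleton_iff, Subtype.ext_iff]

lemma commutator_closure_le {A B : Set K} {C : Subgroup K} [C.Normal]
    (h : ∀ a ∈ A, ∀ b ∈ B, ⁅a, b⁆ ∈ C) : ⁅closure A, closure B⁆ ≤ C := by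
  rw [← QuotientGroup.ker_mk' C, ← Subgroup.map_eq_bot_iff, map_commutator,
    commutator_eq_bot_iff_le_centralizer, MonoidHom.map_closure, MonoidHom.map_closure,
    centralizer_closure, closure_le]
  rintro - ⟨a, ha, rfl⟩ - ⟨b, hb, rfl⟩
  refine (commutatorElement_eq_one_iff_commute.mp ?_).symm
  rw [← map_commutatorElement, QuotientGroup.mk'_apply, QuotientGroup.eq_one_iff]
  exact h a ha b hb

lemma commutatorElement_mul_center (a b : K) {z w : K} (hz : z ∈ center K)
    (hw : w ∈ center K) : ⁅a * z, b * w⁆ = ⁅a, b⁆ := by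
  have hz' : (b * w) * z = z * (b * w) := mem_center_iff.mp hz (b * w)
  have hw' : a⁻¹ * w = w * a⁻¹ := mem_center_iff.mp hw a⁻¹
  calc ⁅a * z, b * w⁆ = a * (b * w * z) * z⁻¹ * a⁻¹ * w⁻¹ * b⁻¹ := by
        rw [hz', commutatorElement_def]; group
    _ = a * b * (w * a⁻¹) * w⁻¹ * b⁻¹ := by group
    _ = ⁅a, b⁆ := by rw [← hw', commutatorElement_def]; group

lemma finite_commutatorSet_of_index_center_ne_zero (h : (center K).index ≠ 0) :
    Finite (commutatorSet K) ∧ Nat.card (commutatorSet K) ≤ (center K).index ^ 2 := by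
  have : (center K).FiniteIndex := ⟨h⟩
  let F : (K ⧸ center K) × (K ⧸ center K) → K := fun q => ⁅q.1.out, q.2.out⁆
  have hsub : commutatorSet K ⊆ Set.range F := by
    rintro - ⟨a, b, rfl⟩
    obtain ⟨z, hz⟩ := QuotientGroup.mk_out_eq_mul (center K) a
    obtain ⟨w, hw⟩ := QuotientGroup.mk_out_eq_mul (center K) b
    exact ⟨(a, b), by simp only [F, hz, hw, commutatorElement_mul_center a b z.2 w.2]⟩
  have hfin : (Set.range F).Finite := Set.finite_range F
  refine ⟨(hfin.subset hsub).to_subtype, ?_⟩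
  calc Nat.card (commutatorSet K) ≤ Nat.card (Set.range F) := Nat.card_mono hfin hsub
    _ ≤ Nat.card ((K ⧸ center K) × (K ⧸ center K)) := Finite.card_range_le F
    _ = (center K).index ^ 2 := by rw [Nat.card_prod, sq, index]

lemma index_center_le_pow {S : Set K} (hS : closure S = ⊤) (hSfin : S.Finite) {c : ℕ}
    (hc : ∀ s ∈ S, (centralizer {s}).index ≠ 0 ∧ (centralizer {s}).index ≤ c) :
    (center K).index ≠ 0 ∧ (center K).index ≤ c ^ S.ncard := by
  have := hSfin.fintype
  rw [center_eq_infi' hS]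
  refine ⟨index_iInf_ne_zero fun s : S => (hc (s : K) s.2).1, (index_iInf_le _).trans ?_⟩
  rw [← Nat.card_coe_set_eq, Nat.card_eq_fintype_card, ← Finset.card_univ]
  exact Finset.prod_le_pow_card _ _ _ fun (s : S) _ => (hc s s.2).2

lemma cardCommutatorBound_mono : Monotone cardCommutatorBound := by
  intro a b hab
  unfold cardCommutatorBound
  rcases Nat.eq_zero_or_pos a with rfl | ha
  · rcases Nat.eq_zero_or_pos b with rfl | hb
    · rfl
    · simp only [mul_zero, pow_zero, one_pow]
      exact Nat.one_le_pow _ _ (Nat.one_le_pow _ _ hb)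
  · have h1 : 1 ≤ a ^ (2 * a) := Nat.one_le_pow _ _ ha
    have h2 : a ^ (2 * a) ≤ b ^ (2 * b) := (Nat.pow_le_pow_left hab _).trans
      (Nat.pow_le_pow_right (ha.trans_le hab) (by omega))
    gcongr
    · exact h1.trans h2
    · omega

lemma card_commutator_le_of_closure_eq_top {S : Set K} (hS : closure S = ⊤) (hSfin : S.Finite)
    {c n : ℕ} (hc0 : 0 < c) (hn : S.ncard ≤ n)
    (hc : ∀ s ∈ S, (centralizer {s}).index ≠ 0 ∧ (centralizer {s}).index ≤ c) :
    Finite (_root_.commutator K) ∧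
      Nat.card (_root_.commutator K) ≤ cardCommutatorBound ((c ^ n) ^ 2) := by
  obtain ⟨hZ0, hZc⟩ := index_center_le_pow hS hSfin hc
  obtain ⟨hfin, hcard⟩ := finite_commutatorSet_of_index_center_ne_zero hZ0
  refine ⟨inferInstance, (card_commutator_le_of_finite_commutatorSet K).trans
    (cardCommutatorBound_mono (hcard.trans ?_))⟩
  exact Nat.pow_le_pow_left (hZc.trans (Nat.pow_le_pow_right hc0 hn)) 2

lemma relIndex_le_index {A : Subgroup K} (hA : A.index ≠ 0) (B : Subgroup K) :
    A.relIndex B ≤ A.index := by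
  rw [← relIndex_top_right] at hA ⊢
  exact relIndex_le_of_le_right le_top hA

lemma card_commutator_closure_le {S : Set K} (hSfin : S.Finite) {c n : ℕ} (hc0 : 0 < c)
    (hn : S.ncard ≤ n)
    (hc : ∀ s ∈ S, (centralizer {s}).index ≠ 0 ∧ (centralizer {s}).index ≤ c) :
    Finite (_root_.commutator (closure S)) ∧
      Nat.card (_root_.commutator (closure S)) ≤ cardCommutatorBound ((c ^ n) ^ 2) := by
  have hsub : S ⊆ Set.range ((↑) : closure S → K) := fun s hs =>
    ⟨⟨s, subset_closure hs⟩, rfl⟩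
  refine card_commutator_le_of_closure_eq_top closure_closure_coe_preimage
    (hSfin.preimage Subtype.val_injective.injOn) hc0 ?_ fun s hs => ?_
  · rwa [Set.ncard_preimage_of_injective_subset_range Subtype.val_injective hsub]
  · rw [index_centralizer_eq_relIndex]
    exact ⟨mt index_eq_zero_of_relIndex_eq_zero (hc s hs).1,
      (relIndex_le_index (hc s hs).1 _).trans (hc s hs).2⟩

lemma pow_factorial_eq_one_of_mem {P : Subgroup K} [Finite P] {B : ℕ} (hB : Nat.card P ≤ B)
    {g : K} (hg : g ∈ P) : g ^ B.factorial = 1 := by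
  have h := orderOf_dvd_natCard (⟨g, hg⟩ : P)
  rw [Subgroup.orderOf_mk] at h
  exact orderOf_dvd_iff_pow_eq_one.mp (h.trans (Nat.dvd_factorial Nat.card_pos hB))

noncomputable def pairCommExponent (m : ℕ) : ℕ := (cardCommutatorBound ((m ^ 2) ^ 2)).factorial

lemma comm_pow_pairCommExponent_eq_one {m : ℕ} {t y : K}
    (ht : (centralizer {t}).index ≠ 0 ∧ (centralizer {t}).index ≤ m)
    (hy : (centralizer {y}).index ≠ 0 ∧ (centralizer {y}).index ≤ m) :
    comm t y ^ pairCommExponent m = 1 := by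
  have hm : 0 < m := (Nat.pos_of_ne_zero ht.1).trans_le ht.2
  set P := closure ({t, y} : Set K)
  obtain ⟨hfin, hcard⟩ := card_commutator_closure_le (Set.toFinite {t, y}) hm
    ((Set.ncard_insert_le t {y}).trans (by rw [Set.ncard_singleton]))
    (by rintro s (rfl | rfl); exacts [ht, hy])
  have hmap := card_map_of_injective (f := P.subtype) (K := _root_.commutator P)
    (subtype_injective _)
  rw [map_subtype_commutator] at hmap
  have : Finite (⁅P, P⁆ : Subgroup K) := Nat.finite_of_card_ne_zero (hmap ▸ Nat.card_pos.ne')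
  rw [← hmap] at hcard
  refine pow_factorial_eq_one_of_mem hcard ?_
  rw [comm_eq_commutatorElement]
  exact commutator_mem_commutator (inv_mem (subset_closure (by simp)))
    (inv_mem (subset_closure (by simp)))

lemma card_closure_le_pow_of_pow_eq_one {A : Type*} [CommGroup A] {s : Set A} (hs : s.Finite)
    {E : ℕ} (hE : 0 < E) (h : ∀ a ∈ s, a ^ E = 1) :
    Finite (closure s) ∧ Nat.card (closure s) ≤ E ^ s.ncard := by
  set s' : Finset (closure s) := (hs.preimage Subtype.val_injective.injOn).toFinset
  have hs' : closure (s' : Set (closure s)) = ⊤ := by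
    rw [Set.Finite.coe_toFinset]; exact closure_closure_coe_preimage
  have : Group.FG (closure s) := ⟨⟨s', hs'⟩⟩
  have hexp : ∀ g : closure s, g ^ E = 1 := by
    rintro ⟨g, hg⟩
    refine Subtype.ext (closure_induction (p := fun g _ => g ^ E = 1) h (one_pow E)
      (fun a b _ _ ha hb => by rw [mul_pow, ha, hb, one_mul])
      (fun a _ ha => by rw [inv_pow, ha, inv_one]) hg)
  have hcard := card_dvd_exponent_pow_rank' (closure s) hexp
  have hcard' : Nat.card (closure s) ≤ E ^ s.ncard := by
    refine (Nat.le_of_dvd (pow_pos hE _) hcard).trans (Nat.pow_le_pow_right hE ?_)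
    refine (Group.rank_le hs').trans ?_
    rw [← Set.ncard_coe_finset, Set.Finite.coe_toFinset]
    exact Set.ncard_preimage_of_injective_subset_range Subtype.val_injective
      (fun a ha => ⟨⟨a, Subgroup.subset_closure ha⟩, rfl⟩) |>.le
  exact ⟨Nat.finite_of_card_ne_zero (Nat.pos_of_dvd_of_pos hcard (pow_pos hE _)).ne', hcard'⟩

lemma card_le_card_map_mul_card_ker (φ : K →* L) (P : Subgroup K) [Finite (P.map φ)]
    [Finite φ.ker] :
    Finite P ∧ Nat.card P ≤ Nat.card (P.map φ) * Nat.card φ.ker := by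
  set ψ := φ.comp P.subtype
  have hrange : ψ.range = P.map φ := by rw [MonoidHom.range_comp, range_subtype]
  let j : ψ.ker → φ.ker := fun k => ⟨k.1, k.2⟩
  have hj : Function.Injective j := fun k l hkl =>
    Subtype.ext (Subtype.ext (congrArg (fun i : φ.ker => (i : K)) hkl))
  have : Finite ψ.ker := Finite.of_injective j hj
  have hP : Nat.card ψ.ker * Nat.card (P.map φ) = Nat.card P := by
    rw [← hrange, ← index_ker ψ, card_mul_index]
  refine ⟨Nat.finite_of_card_ne_zero (hP ▸ mul_ne_zero Nat.card_pos.ne' Nat.card_pos.ne'), ?_⟩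
  rw [← hP, mul_comm]
  exact Nat.mul_le_mul_left _ (Nat.card_le_card_of_injective j hj)

lemma card_closure_le_of_abelianization_pow_eq_one {N : Subgroup K}
    [Finite (_root_.commutator N)] {gens : Set K} (hgN : gens ⊆ N) (hfin : gens.Finite)
    {E : ℕ} (hE : 0 < E) (h : ∀ c : N, (c : K) ∈ gens → Abelianization.of c ^ E = 1) :
    Finite (closure gens) ∧
      Nat.card (closure gens) ≤ E ^ gens.ncard * Nat.card (_root_.commutator N) := by
  set P : Subgroup N := closure (Subtype.val ⁻¹' gens)
  have hmap : P.map N.subtype = closure gens := by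
    rw [MonoidHom.map_closure, coe_subtype, Set.image_preimage_eq_of_subset (by simpa using hgN)]
  have hgens' : (Subtype.val ⁻¹' gens : Set N).ncard ≤ gens.ncard :=
    (Set.ncard_preimage_of_injective_subset_range Subtype.val_injective
      (by simpa using hgN)).le
  obtain ⟨hab, habcard⟩ := card_closure_le_pow_of_pow_eq_one
    ((hfin.preimage Subtype.val_injective.injOn).image Abelianization.of) hE
    (by rintro - ⟨c, hc, rfl⟩; exact h c hc)
  rw [← MonoidHom.map_closure] at hab habcard
  have : Finite (Abelianization.of : N →* Abelianization N).ker := by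
    rw [Abelianization.ker_of]; infer_instance
  obtain ⟨hP, hPcard⟩ := card_le_card_map_mul_card_ker Abelianization.of P
  rw [Abelianization.ker_of] at hPcard
  have hcard : Nat.card (closure gens) = Nat.card P := by
    rw [← hmap, card_map_of_injective (subtype_injective N)]
  refine ⟨Nat.finite_of_card_ne_zero (hcard ▸ Nat.card_pos.ne'), hcard ▸ hPcard.trans ?_⟩
  exact Nat.mul_le_mul_right _ (habcard.trans (Nat.pow_le_pow_right hE
    ((Set.ncard_image_le (hfin.preimage Subtype.val_injective.injOn)).trans hgens')))

lemma abelianization_of_conj_pow_eq {N : Subgroup K} {O T : Set K}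
    {E : ℕ} (hON : O ⊆ N) (hOconj : ∀ z ∈ O, ∀ g, conj z g ∈ O)
    (htor : ∀ z ∈ O, ∀ t ∈ T, comm z t ^ E = 1) {g : K} (hg : g ∈ closure T) :
    ∀ z w : N, (z : K) ∈ O → (w : K) = conj (z : K) g →
      Abelianization.of w ^ E = Abelianization.of z ^ E := by
  induction hg using closure_induction with
  | mem t ht =>
    intro z w hz hw
    have hc : ((z⁻¹ * w : N) : K) = comm (z : K) t := by
      rw [coe_mul, coe_inv, hw, conj_eq_mul_comm, inv_mul_cancel_left]
    have hc1 : (z⁻¹ * w) ^ E = 1 := Subtype.ext (by simp only [SubgroupClass.coe_pow, hc,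
      htor z hz t ht, OneMemClass.coe_one])
    rw [← mul_inv_cancel_left z w, map_mul, mul_pow, ← map_pow Abelianization.of (z⁻¹ * w),
      hc1, map_one, mul_one]
  | one =>
    intro z w _ hw
    rw [Subtype.ext (hw.trans (conj_one _))]
  | mul g₁ g₂ _ _ ih₁ ih₂ =>
    intro z w hz hw
    have hu : conj (z : K) g₁ ∈ O := hOconj z hz g₁
    rw [ih₂ ⟨_, hON hu⟩ w hu (by rw [hw, conj_conj]), ih₁ z _ hz rfl]
  | inv g _ ih =>
    intro z w hz hw
    have hwO : (w : K) ∈ O := hw ▸ hOconj z hz g⁻¹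
    exact (ih w z hwO (by rw [hw, conj_conj, inv_mul_cancel, conj_one])).symm

noncomputable def commSubBound (m : ℕ) : ℕ :=
  pairCommExponent m ^ m * cardCommutatorBound ((m ^ m) ^ 2)

theorem card_commSub_le_of_normal_generating_set {T : Set K} {m : ℕ}
    (hgen : closure T = ⊤) (hconj : ∀ t ∈ T, ∀ g, conj t g ∈ T)
    (hcent : ∀ t ∈ T, (centralizer {t}).index ≠ 0 ∧ (centralizer {t}).index ≤ m)
    {x : K} (hx : x ∈ T) :
    Finite (commSub Set.univ x) ∧ Nat.card (commSub Set.univ x) ≤ commSubBound m := by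
  set O := Set.range (conj x)
  have hOT : O ⊆ T := by rintro - ⟨g, rfl⟩; exact hconj x hx g
  have hOfin : O.Finite := Set.finite_of_ncard_ne_zero (by
    rw [ncard_range_conj]; exact (hcent x hx).1)
  have hOm : O.ncard ≤ m := (ncard_range_conj x).trans_le (hcent x hx).2
  have hm : 0 < m := (Nat.pos_of_ne_zero (hcent x hx).1).trans_le (hcent x hx).2
  obtain ⟨hN', hN'card⟩ := card_commutator_closure_le hOfin hm hOm fun s hs => hcent s (hOT hs)
  have htor : ∀ z ∈ O, ∀ t ∈ T, comm z t ^ pairCommExponent m = 1 := fun z hz t ht =>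
    comm_pow_pairCommExponent_eq_one (hcent z (hOT hz)) (hcent t ht)
  have hxN : x ∈ closure O := subset_closure (mem_range_conj_self x)
  have hgN : (fun y => y⁻¹ * x) '' O ⊆ closure O := by
    rintro - ⟨y, hy, rfl⟩
    exact mul_mem (inv_mem (subset_closure hy)) hxN
  rw [commSub_univ_eq_closure]
  obtain ⟨hfin, hcard⟩ := card_closure_le_of_abelianization_pow_eq_one hgN (hOfin.image _)
    (E := pairCommExponent m) (Nat.factorial_pos _) fun c hc => by
      obtain ⟨-, ⟨s, rfl⟩, hcs⟩ := hc
      have hc : c = (⟨conj x s, subset_closure ⟨s, rfl⟩⟩ : closure O)⁻¹ * ⟨x, hxN⟩ :=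
        Subtype.ext hcs.symm
      rw [hc, map_mul, map_inv, mul_pow, inv_pow, abelianization_of_conj_pow_eq subset_closure
        (fun z hz => conj_mem_range_conj hz) htor (hgen ▸ mem_top s) ⟨x, hxN⟩ _
        (mem_range_conj_self x) rfl, inv_mul_cancel]
  refine ⟨hfin, hcard.trans (Nat.mul_le_mul (Nat.pow_le_pow_right (Nat.factorial_pos _)
    ((Set.ncard_image_le hOfin).trans hOm)) hN'card)⟩

lemma closure_normal_of_conj_mem {T : Set K}
    (hT : ∀ t ∈ T, ∀ g, conj t g ∈ T) : (closure T).Normal := by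
  refine ⟨fun n hn g => ?_⟩
  have : (closure T).map (MulAut.conj g).toMonoidHom ≤ closure T := by
    rw [MonoidHom.map_closure, closure_le]
    rintro - ⟨t, ht, rfl⟩
    simpa [conj] using subset_closure (hT t ht g⁻¹)
  exact this ⟨n, hn, rfl⟩

theorem card_commSub_closure_le {T : Set K} {m : ℕ}
    (hconj : ∀ t ∈ T, ∀ g ∈ closure T, conj t g ∈ T)
    (hcent : ∀ t ∈ T, (centralizer {t}).relIndex (closure T) ≠ 0 ∧
      (centralizer {t}).relIndex (closure T) ≤ m)
    {x : K} (hx : x ∈ T) :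
    Finite (commSub (closure T : Set K) x) ∧
      Nat.card (commSub (closure T : Set K) x) ≤ commSubBound m := by
  set x' : closure T := ⟨x, subset_closure hx⟩
  have hmap : (commSub Set.univ x').map (closure T).subtype = commSub (closure T : Set K) x := by
    rw [commSub, MonoidHom.map_closure]
    congr 1
    ext c
    constructor
    · rintro ⟨-, ⟨s, -, rfl⟩, rfl⟩
      exact ⟨s, s.2, map_comm _ _ _⟩
    · rintro ⟨s, hs, rfl⟩
      exact ⟨_, ⟨⟨s, hs⟩, trivial, rfl⟩, map_comm (closure T).subtype _ _⟩
  have hcard := card_map_of_injective (K := commSub Set.univ x') (subtype_injective (closure T))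
  rw [hmap] at hcard
  obtain ⟨hfin, hle⟩ := card_commSub_le_of_normal_generating_set (T := Subtype.val ⁻¹' T)
    closure_closure_coe_preimage
    (fun t ht g => hconj _ ht g g.2)
    (fun t ht => index_centralizer_eq_relIndex t ▸ hcent t ht) (x := x') hx
  exact ⟨Nat.finite_of_card_ne_zero (hcard ▸ Nat.card_pos.ne'), hcard ▸ hle⟩

end

section

variable {G : Type u} [Group G]

lemma mk_eq_one_of_mem_nuRels {r : FreeGroup (G ⊕ G)} (h : r ∈ nuRels G) :
    PresentedGroup.mk (nuRels G) r = 1 :=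
  (QuotientGroup.eq_one_iff _).mpr (subset_normalClosure h)

lemma ι_mul (g h : G) : ι G (g * h) = ι G g * ι G h := by
  have h1 := mk_eq_one_of_mem_nuRels (G := G) (Or.inl ⟨g, h, rfl⟩)
  rw [map_mul, map_mul, map_inv, mul_inv_eq_one] at h1
  exact h1.symm

lemma ιφ_mul (g h : G) : ιφ G (g * h) = ιφ G g * ιφ G h := by
  have h1 := mk_eq_one_of_mem_nuRels (G := G) (Or.inr (Or.inl ⟨g, h, rfl⟩))
  rw [map_mul, map_mul, map_inv, mul_inv_eq_one] at h1
  exact h1.symm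

lemma ι_inv (g : G) : ι G g⁻¹ = (ι G g)⁻¹ := map_inv (MonoidHom.mk' (ι G) ι_mul) g

lemma ιφ_inv (g : G) : ιφ G g⁻¹ = (ιφ G g)⁻¹ := map_inv (MonoidHom.mk' (ιφ G) ιφ_mul) g

lemma conj_tensor_ι (a b g : G) :
    conj (comm (ι G a) (ιφ G b)) (ι G g) = comm (ι G (conj a g)) (ιφ G (conj b g)) := by
  have h1 := mk_eq_one_of_mem_nuRels (G := G) (Or.inr (Or.inr (Or.inl ⟨a, b, g, rfl⟩)))
  rw [map_mul, map_inv, map_conj, map_comm, map_comm, mul_inv_eq_one] at h1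
  exact h1

lemma conj_tensor_ιφ (a b g : G) :
    conj (comm (ι G a) (ιφ G b)) (ιφ G g) = conj (comm (ι G a) (ιφ G b)) (ι G g) := by
  have h1 := mk_eq_one_of_mem_nuRels (G := G) (Or.inr (Or.inr (Or.inr ⟨a, b, g, rfl⟩)))
  rw [map_mul, map_inv, map_conj, map_conj, map_comm, mul_inv_eq_one] at h1
  exact h1.symm

lemma conj_mem_tensorSet {t : Nu G} (ht : t ∈ tensorSet G) (w : Nu G) :
    conj t w ∈ tensorSet G := by
  have hw : w ∈ closure (Set.range (PresentedGroup.of (rels := nuRels G))) := by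
    rw [PresentedGroup.closure_range_of]; trivial
  induction hw using closure_induction'' generalizing t with
  | mem _ hy =>
    obtain ⟨a, b, rfl⟩ := ht
    obtain ⟨g | g, rfl⟩ := hy
    exacts [⟨_, _, conj_tensor_ι a b g⟩,
      ⟨_, _, (conj_tensor_ιφ a b g).trans (conj_tensor_ι a b g)⟩]
  | inv_mem _ hy =>
    obtain ⟨a, b, rfl⟩ := ht
    obtain ⟨g | g, rfl⟩ := hy
    · exact ⟨_, _, (congrArg _ (ι_inv g).symm).trans (conj_tensor_ι a b g⁻¹)⟩
    · exact ⟨_, _, (congrArg _ (ιφ_inv g).symm).trans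
        ((conj_tensor_ιφ a b g⁻¹).trans (conj_tensor_ι a b g⁻¹))⟩
  | one => rwa [conj_one]
  | mul _ _ _ _ ih₁ ih₂ => rw [← conj_conj]; exact ih₂ (ih₁ ht)

lemma commutatorElement_ι_ιφ_mem (a b : G) : ⁅ι G a, ιφ G b⁆ ∈ tensorSet G :=
  ⟨a⁻¹, b⁻¹, by rw [ι_inv, ιφ_inv, comm_eq_commutatorElement, inv_inv, inv_inv]⟩

lemma tensorSquare_eq_closure : tensorSquare G = closure (tensorSet G) := by
  have := closure_normal_of_conj_mem fun _ ht w => conj_mem_tensorSet (G := G) ht w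
  refine le_antisymm (commutator_closure_le ?_) (closure_le _ |>.mpr ?_)
  · rintro - ⟨a, rfl⟩ - ⟨b, rfl⟩
    exact subset_closure (commutatorElement_ι_ιφ_mem a b)
  · rintro - ⟨a, b, rfl⟩
    rw [comm_eq_commutatorElement]
    exact commutator_mem_commutator (inv_mem (subset_closure ⟨a, rfl⟩))
      (inv_mem (subset_closure ⟨b, rfl⟩))

end

/-- If every tensor has centralizer of finite index in `ν(G)` and `m` is the maximum
of the indices of `C_{[G,G^φ]}(x)` in `[G,G^φ]` over tensors `x`, then for every
tensor `x` the subgroup `[[G,G^φ], x]` is finite of `m`-bounded order. -/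
theorem commSub_tensor_finite : ∃ f : ℕ → ℕ, ∀ (G : Type u) [Group G] (m : ℕ),
    (∀ x ∈ tensorSet G, (Subgroup.centralizer {x}).index ≠ 0) →
    IsGreatest {k : ℕ | ∃ x ∈ tensorSet G,
        k = (Subgroup.centralizer {x}).relIndex (tensorSquare G)} m →
    ∀ x ∈ tensorSet G,
      Finite (commSub (tensorSquare G : Set (Nu G)) x) ∧
      Nat.card (commSub (tensorSquare G : Set (Nu G)) x) ≤ f m := by
  refine ⟨commSubBound, fun G _ m hfin hmax x hx => ?_⟩
  rw [tensorSquare_eq_closure] at hmax ⊢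
  exact card_commSub_closure_le (fun t ht g _ => conj_mem_tensorSet ht g)
    (fun t ht => ⟨mt index_eq_zero_of_relIndex_eq_zero (hfin t ht), hmax.2 ⟨t, ht, rfl⟩⟩) hx

end TensorNu
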